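/- arXiv:2412.19266 — 6 statements merged into one kernel-verified Lean document; each statement's English description precedes it below -/
import Mathlib

section
/- Let (Γ, T, n⊥, n, κ_g, τ_g) be a closed asymptotic curve in ℝ³ and let u be a unit vector such that ⟨u, n(t)⟩ ≠ 0 for all t. Then for every point p ∈ ℝ³ there exists t ∈ [0, 2π] with ⟨Γ(t) − p, T(t) × u⟩ = 0. (Equivalently: the tangent lines of the planar projection Γ_u cover the whole plane orthogonal to u, so Γ_u is not locally star-shaped with respect to any point. This is the embedded-graph case of Theorem 1.2/Kovaleva's theorem, proved via Petrunin's argument.) -/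
open Real intervalIntegral

noncomputable section

/-- The cross product on `EuclideanSpace ℝ (Fin 3)`. -/
def cross3 (a b : EuclideanSpace ℝ (Fin 3)) : EuclideanSpace ℝ (Fin 3) :=
  (EuclideanSpace.equiv (Fin 3) ℝ).symm
    (crossProduct ((EuclideanSpace.equiv (Fin 3) ℝ) a) ((EuclideanSpace.equiv (Fin 3) ℝ) b))

/-!
Let `λ(t) = ⟨Γ(t) - p, n(t)⟩ / ⟨u, n(t)⟩`, the height at which the line `p + ℝ u` meets
the plane through `Γ(t)` with normal `n(t)`; it is defined since `⟨u, n⟩` never vanishes,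
and it is `2π`-periodic. As `Γ' = T ⊥ n` and `n' = -τ_g n⊥`, the derivative is
`λ' = τ_g ⟨Γ - p, T × u⟩ / ⟨u, n⟩²`. By Rolle's theorem `λ'` vanishes somewhere on
`[0, 2π]`, and there `⟨Γ - p, T × u⟩ = 0` because `τ_g ≠ 0`.
-/

lemma inner_eq_sum_three (x y : EuclideanSpace ℝ (Fin 3)) :
    (inner ℝ x y : ℝ) = x 0 * y 0 + x 1 * y 1 + x 2 * y 2 := by
  simp [PiLp.inner_apply, Fin.sum_univ_three, mul_comm]

lemma cross3_apply (a b : EuclideanSpace ℝ (Fin 3)) :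
    cross3 a b 0 = a 1 * b 2 - a 2 * b 1 ∧ cross3 a b 1 = a 2 * b 0 - a 0 * b 2 ∧
    cross3 a b 2 = a 0 * b 1 - a 1 * b 0 := by
  simp [cross3, crossProduct]

/-- By Binet–Cauchy the left side is `⟨x × u, N × (N × T)⟩`, and `N × (N × T) = -T`. -/
lemma inner_cross3_of_norm_eq_one_of_inner_eq_zero (x u N T : EuclideanSpace ℝ (Fin 3))
    (hN : ‖N‖ = 1) (hNT : (inner ℝ N T : ℝ) = 0) :
    (inner ℝ x N : ℝ) * inner ℝ u (cross3 N T) - inner ℝ x (cross3 N T) * inner ℝ u N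
      = inner ℝ x (cross3 T u) := by
  have hNN : (inner ℝ N N : ℝ) = 1 := by
    rw [real_inner_self_eq_norm_mul_norm, hN, one_mul]
  obtain ⟨h0, h1, h2⟩ := cross3_apply N T
  obtain ⟨k0, k1, k2⟩ := cross3_apply T u
  rw [inner_eq_sum_three] at hNN hNT
  simp only [inner_eq_sum_three, h0, h1, h2, k0, k1, k2]
  linear_combination (x 0 * (T 1 * u 2 - T 2 * u 1) + x 1 * (T 2 * u 0 - T 0 * u 2)
      + x 2 * (T 0 * u 1 - T 1 * u 0)) * hNN
    - (x 0 * (N 1 * u 2 - N 2 * u 1) + x 1 * (N 2 * u 0 - N 0 * u 2)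
      + x 2 * (N 0 * u 1 - N 1 * u 0)) * hNT

lemma hasDerivAt_inner_div_inner {Γ n : ℝ → EuclideanSpace ℝ (Fin 3)}
    {T : EuclideanSpace ℝ (Fin 3)} {τ t : ℝ} (p u : EuclideanSpace ℝ (Fin 3))
    (hΓ : HasDerivAt Γ T t) (hn : HasDerivAt n (-τ • cross3 (n t) T) t) (hn1 : ‖n t‖ = 1)
    (hnT : (inner ℝ (n t) T : ℝ) = 0) (hun : (inner ℝ u (n t) : ℝ) ≠ 0) :
    HasDerivAt (fun s => (inner ℝ (Γ s - p) (n s) : ℝ) / inner ℝ u (n s))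
      (τ * inner ℝ (Γ t - p) (cross3 T u) / (inner ℝ u (n t)) ^ 2) t := by
  have hnum := (hΓ.sub_const p).inner ℝ hn
  have hden := (hasDerivAt_const t u).inner ℝ hn
  refine (hnum.div hden hun).congr_deriv ?_
  rw [real_inner_comm (n t) T, hnT, inner_zero_left, real_inner_smul_right,
    real_inner_smul_right,
    ← inner_cross3_of_norm_eq_one_of_inner_eq_zero (Γ t - p) u (n t) T hn1 hnT]
  ring

theorem stmt0_general
    (Γ n : ℝ → EuclideanSpace ℝ (Fin 3)) (τg : ℝ → ℝ)
    (hΓ : ContDiff ℝ 2 Γ) (hΓper : Function.Periodic Γ (2 * π))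
    (hn : ContDiff ℝ 1 n) (hnper : Function.Periodic n (2 * π))
    (hn1 : ∀ t, ‖n t‖ = 1)
    (hnT : ∀ t, (inner ℝ (n t) (deriv Γ t) : ℝ) = 0)
    (hτ : ∀ t, τg t ≠ 0)
    (hDarboux3 : ∀ t, deriv n t = -τg t • cross3 (n t) (deriv Γ t))
    (u : EuclideanSpace ℝ (Fin 3))
    (hun : ∀ t, (inner ℝ u (n t) : ℝ) ≠ 0) :
    ∀ p : EuclideanSpace ℝ (Fin 3), ∃ t ∈ Set.Icc (0 : ℝ) (2 * π),
      (inner ℝ (Γ t - p) (cross3 (deriv Γ t) u) : ℝ) = 0 := by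
  intro p
  have hderiv (t : ℝ) := hasDerivAt_inner_div_inner p u
    ((hΓ.differentiable two_ne_zero) t).hasDerivAt
    (hDarboux3 t ▸ ((hn.differentiable one_ne_zero) t).hasDerivAt) (hn1 t) (hnT t) (hun t)
  have hperiodic : (inner ℝ (Γ 0 - p) (n 0) : ℝ) / inner ℝ u (n 0)
      = inner ℝ (Γ (2 * π) - p) (n (2 * π)) / inner ℝ u (n (2 * π)) := by
    simp only [hΓper.eq, hnper.eq]
  obtain ⟨t, ht, hzero⟩ := exists_hasDerivAt_eq_zero two_pi_pos
    (fun t _ => (hderiv t).continuousAt.continuousWithinAt) hperiodic (fun t _ => hderiv t)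
  refine ⟨t, Set.Ioo_subset_Icc_self ht, ?_⟩
  simpa [hτ t, hun t] using hzero

/-- Theorem 1.2 (embedded-graph case / Kovaleva): if `⟨u, n⟩` never vanishes, the tangent
lines of the projection `Γ_u` cover the whole plane, i.e. `Γ_u` is not locally star-shaped
with respect to any point. -/
theorem stmt0
    (Γ n : ℝ → EuclideanSpace ℝ (Fin 3)) (κg τg : ℝ → ℝ)
    (hΓ : ContDiff ℝ 2 Γ) (hΓper : Function.Periodic Γ (2 * π))
    (hT1 : ∀ t, ‖deriv Γ t‖ = 1)
    (hn : ContDiff ℝ 1 n) (hnper : Function.Periodic n (2 * π))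
    (hn1 : ∀ t, ‖n t‖ = 1)
    (hnT : ∀ t, (inner ℝ (n t) (deriv Γ t) : ℝ) = 0)
    (hκcont : Continuous κg) (hκper : Function.Periodic κg (2 * π))
    (hτcont : Continuous τg) (hτper : Function.Periodic τg (2 * π))
    (hτ : ∀ t, τg t ≠ 0)
    (hDarboux1 : ∀ t, deriv (deriv Γ) t = κg t • cross3 (n t) (deriv Γ t))
    (hDarboux2 : ∀ t, deriv (fun s => cross3 (n s) (deriv Γ s)) t
      = -κg t • deriv Γ t + τg t • n t)
    (hDarboux3 : ∀ t, deriv n t = -τg t • cross3 (n t) (deriv Γ t))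
    (u : EuclideanSpace ℝ (Fin 3)) (hu : ‖u‖ = 1)
    (hun : ∀ t, (inner ℝ u (n t) : ℝ) ≠ 0) :
    ∀ p : EuclideanSpace ℝ (Fin 3), ∃ t ∈ Set.Icc (0 : ℝ) (2 * π),
      (inner ℝ (Γ t - p) (cross3 (deriv Γ t) u) : ℝ) = 0 :=
  stmt0_general Γ n τg hΓ hΓper hn hnper hn1 hnT hτ hDarboux3 u hun
end
end

section
/- Let Γ : ℝ → ℝ³ be a 2π-periodic C³ regular curve with nonvanishing curvature and nonvanishing torsion, i.e. Γ′(t) × Γ″(t) ≠ 0 and ⟨Γ′(t) × Γ″(t), Γ‴(t)⟩ ≠ 0 for all t. Let u be a unit vector with ⟨Γ′(t) × Γ″(t), u⟩ ≠ 0 for all t (so the planar projection Γ_u has no inflections). Then for every point p ∈ ℝ³ there exists t ∈ [0, 2π] with ⟨Γ(t) − p, Γ′(t) × u⟩ = 0; that is, the tangent lines of Γ_u cover the whole plane orthogonal to u, so Γ_u cannot be locally star-shaped. In particular, a closed curve with nonvanishing curvature and torsion cannot project onto a strictly convex planar curve. (Theorem 1.3 for curves with nonvanishing torsion.) -/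
/-!
Since `Γ_u` has no inflections, `P = ⟪(Γ - p) × Γ', Γ''⟫ / ⟪Γ' × Γ'', u⟫` is a well-defined
`2π`-periodic function, so by Rolle's theorem `P'` vanishes somewhere. The numerator of `P'` is
`⟪(Γ - p) × Γ', u⟫ ⟪Γ' × Γ'', Γ'''⟫` (`inner_cross3_wronskian`), and the torsion factor never
vanishes, so the tangent line of `Γ_u` at that parameter passes through `p`.
-/

open Real intervalIntegral

noncomputable section

theorem Function.Periodic.deriv {𝕜 F : Type*} [NontriviallyNormedField 𝕜] [NormedAddCommGroup F]
    [NormedSpace 𝕜 F] {f : 𝕜 → F} {c : 𝕜} (h : Function.Periodic f c) :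
    Function.Periodic (deriv f) c := by
  intro x
  rw [← deriv_comp_add_const, h.funext]

theorem exists_deriv_mul_sub_mul_deriv_eq_zero {g c g' c' : ℝ → ℝ} {a b : ℝ} (hab : a < b)
    (hg : ∀ t, HasDerivAt g (g' t) t) (hc : ∀ t, HasDerivAt c (c' t) t) (hc0 : ∀ t, c t ≠ 0)
    (hgc : g a / c a = g b / c b) :
    ∃ t ∈ Set.Ioo a b, g' t * c t - g t * c' t = 0 := by
  have hquot t : HasDerivAt (fun s => g s / c s) ((g' t * c t - g t * c' t) / c t ^ 2) t :=
    (hg t).div (hc t) (hc0 t)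
  obtain ⟨t, ht, hzero⟩ := exists_hasDerivAt_eq_zero hab
    (fun s _ => (hquot s).continuousAt.continuousWithinAt) hgc (fun s _ => hquot s)
  exact ⟨t, ht, (div_eq_zero_iff.mp hzero).resolve_right (pow_ne_zero 2 (hc0 t))⟩

local notation "E³" => EuclideanSpace ℝ (Fin 3)

open scoped RealInnerProductSpace

theorem inner_cross3 (a b c : E³) :
    ⟪cross3 a b, c⟫ =
      (a 1 * b 2 - a 2 * b 1) * c 0 + (a 2 * b 0 - a 0 * b 2) * c 1
        + (a 0 * b 1 - a 1 * b 0) * c 2 := by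
  simp [cross3, cross_apply, PiLp.inner_apply, Fin.sum_univ_three, EuclideanSpace.equiv]
  ring

theorem inner_cross3_comm (a b c : E³) : ⟪a, cross3 b c⟫ = ⟪cross3 a b, c⟫ := by
  rw [real_inner_comm, inner_cross3, inner_cross3]
  ring

theorem inner_cross3_wronskian (x a b c u : E³) :
    ⟪cross3 x a, c⟫ * ⟪cross3 a b, u⟫ - ⟪cross3 x a, b⟫ * ⟪cross3 a c, u⟫ =
      ⟪cross3 x a, u⟫ * ⟪cross3 a b, c⟫ := by
  simp only [inner_cross3]
  ring

def cross3L : E³ →L[ℝ] E³ →L[ℝ] E³ :=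
  LinearMap.toContinuousLinearMap <| LinearMap.toContinuousLinearMap.toLinearMap ∘ₗ
    ((crossProduct.compl₁₂ (EuclideanSpace.equiv (Fin 3) ℝ).toLinearMap
      (EuclideanSpace.equiv (Fin 3) ℝ).toLinearMap).compr₂
        (EuclideanSpace.equiv (Fin 3) ℝ).symm.toLinearMap)

theorem hasDerivAt_cross3 {a b : ℝ → E³} {a' b' : E³} {t : ℝ}
    (ha : HasDerivAt a a' t) (hb : HasDerivAt b b' t) :
    HasDerivAt (fun s => cross3 (a s) (b s)) (cross3 a' (b t) + cross3 (a t) b') t := by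
  rw [add_comm]
  exact cross3L.hasDerivAt_of_bilinear (fun _ => ha) (fun _ => hb)

theorem hasDerivAt_inner_cross3 {a b c : ℝ → E³} {a' b' c' : E³} {t : ℝ}
    (ha : HasDerivAt a a' t) (hb : HasDerivAt b b' t) (hc : HasDerivAt c c' t) :
    HasDerivAt (fun s => ⟪cross3 (a s) (b s), c s⟫)
      (⟪cross3 a' (b t), c t⟫ + ⟪cross3 (a t) b', c t⟫ + ⟪cross3 (a t) (b t), c'⟫) t := by
  have := (hasDerivAt_cross3 ha hb).inner ℝ hc
  rwa [inner_add_left, add_comm] at this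

theorem hasDerivAt_inner_cross3_chain {x a b : ℝ → E³} {b' : E³} {t : ℝ}
    (hx : HasDerivAt x (a t) t) (ha : HasDerivAt a (b t) t) (hb : HasDerivAt b b' t) :
    HasDerivAt (fun s => ⟪cross3 (x s) (a s), b s⟫) ⟪cross3 (x t) (a t), b'⟫ t := by
  convert hasDerivAt_inner_cross3 hx ha hb using 1
  simp only [inner_cross3]
  ring

theorem hasDerivAt_inner_cross3_chain_const {a b : ℝ → E³} {b' : E³} {t : ℝ} (u : E³)
    (ha : HasDerivAt a (b t) t) (hb : HasDerivAt b b' t) :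
    HasDerivAt (fun s => ⟪cross3 (a s) (b s), u⟫) ⟪cross3 (a t) b', u⟫ t := by
  convert hasDerivAt_inner_cross3 ha hb (hasDerivAt_const t u) using 1
  simp only [inner_cross3, PiLp.zero_apply]
  ring

theorem stmt2_general
    (Γ : ℝ → EuclideanSpace ℝ (Fin 3))
    (hΓ : ContDiff ℝ 3 Γ) (hΓper : Function.Periodic Γ (2 * π))
    (htor : ∀ t, (inner ℝ (cross3 (deriv Γ t) (deriv (deriv Γ) t))
      (deriv (deriv (deriv Γ)) t) : ℝ) ≠ 0)
    (u : EuclideanSpace ℝ (Fin 3))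
    (hinfl : ∀ t, (inner ℝ (cross3 (deriv Γ t) (deriv (deriv Γ) t)) u : ℝ) ≠ 0) :
    ∀ p : EuclideanSpace ℝ (Fin 3), ∃ t ∈ Set.Icc (0 : ℝ) (2 * π),
      (inner ℝ (Γ t - p) (cross3 (deriv Γ t) u) : ℝ) = 0 := by
  intro p
  have hΓ₁ t : HasDerivAt Γ (deriv Γ t) t := (hΓ.differentiable (by norm_num) t).hasDerivAt
  have hΓ₂ t : HasDerivAt (deriv Γ) (deriv (deriv Γ) t) t :=
    ((hΓ.deriv' (n := 2)).differentiable (by norm_num) t).hasDerivAt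
  have hΓ₃ t : HasDerivAt (deriv (deriv Γ)) (deriv (deriv (deriv Γ)) t) t :=
    (((hΓ.deriv' (n := 2)).deriv' (n := 1)).differentiable one_ne_zero t).hasDerivAt
  obtain ⟨t, ht, hW⟩ := exists_deriv_mul_sub_mul_deriv_eq_zero two_pi_pos
    (fun t => hasDerivAt_inner_cross3_chain ((hΓ₁ t).sub_const p) (hΓ₂ t) (hΓ₃ t))
    (fun t => hasDerivAt_inner_cross3_chain_const u (hΓ₂ t) (hΓ₃ t)) hinfl
    (by beta_reduce; rw [← zero_add (2 * π), hΓper 0, hΓper.deriv 0, hΓper.deriv.deriv 0])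
  rw [inner_cross3_wronskian] at hW
  exact ⟨t, Set.Ioo_subset_Icc_self ht,
    (inner_cross3_comm _ _ _).trans ((mul_eq_zero.mp hW).resolve_right (htor t))⟩

/-- Theorem 1.3 for curves with nonvanishing curvature and torsion: if the projection
`Γ_u` has no inflections, its tangent lines cover the whole plane orthogonal to `u`. -/
theorem stmt2
    (Γ : ℝ → EuclideanSpace ℝ (Fin 3))
    (hΓ : ContDiff ℝ 3 Γ) (hΓper : Function.Periodic Γ (2 * π))
    (hreg : ∀ t, deriv Γ t ≠ 0)
    (hcurv : ∀ t, cross3 (deriv Γ t) (deriv (deriv Γ) t) ≠ 0)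
    (htor : ∀ t, (inner ℝ (cross3 (deriv Γ t) (deriv (deriv Γ) t))
      (deriv (deriv (deriv Γ)) t) : ℝ) ≠ 0)
    (u : EuclideanSpace ℝ (Fin 3)) (hu : ‖u‖ = 1)
    (hinfl : ∀ t, (inner ℝ (cross3 (deriv Γ t) (deriv (deriv Γ) t)) u : ℝ) ≠ 0) :
    ∀ p : EuclideanSpace ℝ (Fin 3), ∃ t ∈ Set.Icc (0 : ℝ) (2 * π),
      (inner ℝ (Γ t - p) (cross3 (deriv Γ t) u) : ℝ) = 0 :=
  stmt2_general Γ hΓ hΓper htor u hinfl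
end
end

section
/- Let (Γ, T, n⊥, n, κ_g, τ_g) be a closed asymptotic curve in ℝ³. Then the function h(t) := ⟨Γ(t), n(t)⟩ satisfies h′(t) = −τ_g(t)·⟨Γ(t), n⊥(t)⟩ for all t; consequently, since h is 2π-periodic and τ_g is nowhere zero, for every point p ∈ ℝ³ there exists t ∈ [0, 2π] with ⟨Γ(t) − p, n⊥(t)⟩ = 0. -/
open Real intervalIntegral

noncomputable section

/-! Since `n` is normal to `Γ′`, the derivative of `⟨Γ − p, n⟩` is
`⟨Γ − p, n′⟩ = −τ_g·⟨Γ − p, n⊥⟩`. This function is periodic, so by Rolle's theorem its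
derivative vanishes somewhere, and there `⟨Γ − p, n⊥⟩ = 0` because `τ_g ≠ 0`. -/

theorem hasDerivAt_inner_sub_const_of_inner_eq_zero {E : Type*} [NormedAddCommGroup E]
    [InnerProductSpace ℝ E] {γ ν : ℝ → E} {γ' ν' : E} {t : ℝ} (p : E)
    (hγ : HasDerivAt γ γ' t) (hν : HasDerivAt ν ν' t) (hγν : inner ℝ γ' (ν t) = 0) :
    HasDerivAt (fun s => inner ℝ (γ s - p) (ν s)) (inner ℝ (γ t - p) ν') t := by
  simpa [hγν] using (hγ.sub_const p).inner ℝ hν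

theorem Function.Periodic.exists_hasDerivAt_eq_zero {f f' : ℝ → ℝ} {c : ℝ}
    (hf : Function.Periodic f c) (hc : 0 < c) (hff' : ∀ x, HasDerivAt f (f' x) x) :
    ∃ t ∈ Set.Ioo 0 c, f' t = 0 :=
  _root_.exists_hasDerivAt_eq_zero hc (fun x _ => (hff' x).continuousAt.continuousWithinAt)
    (by simpa using (hf 0).symm) fun x _ => hff' x

theorem stmt4_general
    (Γ n : ℝ → EuclideanSpace ℝ (Fin 3)) (τg : ℝ → ℝ)
    (hΓ : ContDiff ℝ 2 Γ) (hΓper : Function.Periodic Γ (2 * π))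
    (hn : ContDiff ℝ 1 n) (hnper : Function.Periodic n (2 * π))
    (hnT : ∀ t, (inner ℝ (n t) (deriv Γ t) : ℝ) = 0)
    (hτ : ∀ t, τg t ≠ 0)
    (hDarboux3 : ∀ t, deriv n t = -τg t • cross3 (n t) (deriv Γ t))
    :
    (∀ t, deriv (fun s => (inner ℝ (Γ s) (n s) : ℝ)) t
        = -τg t * (inner ℝ (Γ t) (cross3 (n t) (deriv Γ t)) : ℝ)) ∧
    ∀ p : EuclideanSpace ℝ (Fin 3), ∃ t ∈ Set.Icc (0 : ℝ) (2 * π),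
      (inner ℝ (Γ t - p) (cross3 (n t) (deriv Γ t)) : ℝ) = 0 := by
  have hasDerivAt_inner_normal (p : EuclideanSpace ℝ (Fin 3)) (t : ℝ) :
      HasDerivAt (fun s => (inner ℝ (Γ s - p) (n s) : ℝ))
        (-τg t * (inner ℝ (Γ t - p) (cross3 (n t) (deriv Γ t)) : ℝ)) t := by
    rw [← real_inner_smul_right, ← hDarboux3]
    exact hasDerivAt_inner_sub_const_of_inner_eq_zero p
      (hΓ.differentiable (by norm_num) t).hasDerivAt (hn.differentiable (by norm_num) t).hasDerivAt
      (by rw [real_inner_comm]; exact hnT t)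
  refine ⟨fun t => by simpa using (hasDerivAt_inner_normal 0 t).deriv, fun p => ?_⟩
  have hper : Function.Periodic (fun s => (inner ℝ (Γ s - p) (n s) : ℝ)) (2 * π) :=
    fun s => by simp only [hΓper s, hnper s]
  obtain ⟨t, ht, hzero⟩ := hper.exists_hasDerivAt_eq_zero two_pi_pos (hasDerivAt_inner_normal p)
  exact ⟨t, Set.Ioo_subset_Icc_self ht,
    (mul_eq_zero.mp hzero).resolve_left (neg_ne_zero.mpr (hτ t))⟩

/-- The function `h = ⟨Γ, n⟩` satisfies `h′ = −τ_g·⟨Γ, n⊥⟩`; since `h` is periodic and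
`τ_g` never vanishes, for every point `p` some tangent plane line meets it:
`⟨Γ(t) − p, n⊥(t)⟩ = 0` for some `t ∈ [0, 2π]`. -/
theorem stmt4
    (Γ n : ℝ → EuclideanSpace ℝ (Fin 3)) (κg τg : ℝ → ℝ)
    (hΓ : ContDiff ℝ 2 Γ) (hΓper : Function.Periodic Γ (2 * π))
    (hT1 : ∀ t, ‖deriv Γ t‖ = 1)
    (hn : ContDiff ℝ 1 n) (hnper : Function.Periodic n (2 * π))
    (hn1 : ∀ t, ‖n t‖ = 1)
    (hnT : ∀ t, (inner ℝ (n t) (deriv Γ t) : ℝ) = 0)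
    (hκcont : Continuous κg) (hκper : Function.Periodic κg (2 * π))
    (hτcont : Continuous τg) (hτper : Function.Periodic τg (2 * π))
    (hτ : ∀ t, τg t ≠ 0)
    (hDarboux1 : ∀ t, deriv (deriv Γ) t = κg t • cross3 (n t) (deriv Γ t))
    (hDarboux2 : ∀ t, deriv (fun s => cross3 (n s) (deriv Γ s)) t
      = -κg t • deriv Γ t + τg t • n t)
    (hDarboux3 : ∀ t, deriv n t = -τg t • cross3 (n t) (deriv Γ t))
    :
    (∀ t, deriv (fun s => (inner ℝ (Γ s) (n s) : ℝ)) t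
        = -τg t * (inner ℝ (Γ t) (cross3 (n t) (deriv Γ t)) : ℝ)) ∧
    ∀ p : EuclideanSpace ℝ (Fin 3), ∃ t ∈ Set.Icc (0 : ℝ) (2 * π),
      (inner ℝ (Γ t - p) (cross3 (n t) (deriv Γ t)) : ℝ) = 0 :=
  stmt4_general Γ n τg hΓ hΓper hn hnper hnT hτ hDarboux3
end
end

section
/- Let (Γ, T, n⊥, n, κ_g, τ_g) be a closed asymptotic curve in ℝ³ and u a unit vector with u × T(t) ≠ 0 for all t. Then the set Z := {t ∈ [0, 2π) : ⟨u, n(t)⟩ = 0} is finite, and at each t₀ ∈ Z the derivative of the function t ↦ ⟨u, n(t)⟩, which equals −τ_g(t₀)·⟨u, n⊥(t₀)⟩, is nonzero (i.e. every zero of ⟨u, n⟩ is nondegenerate). -/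
/-!
Differentiating along the curve, `⟨u, n⟩' = -τ_g ⟨u, n⊥⟩`. At a zero of `⟨u, n⟩`, if
also `⟨u, n⊥⟩ = 0`, then `u` is orthogonal to both `n` and `n × T` and hence parallel to
`T`, contradicting `u × T ≠ 0`. As `τ_g` never vanishes, every zero is nondegenerate, hence
isolated, and the zero set, closed in the compact interval `[0, 2π]`, is finite.
-/

open Real intervalIntegral

noncomputable section

theorem IsCompact.finite_setOf_eq_of_hasDerivAt_ne_zero {𝕜 F : Type*}
    [NontriviallyNormedField 𝕜] [NormedAddCommGroup F] [NormedSpace 𝕜 F]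
    {f f' : 𝕜 → F} {s : Set 𝕜} {c : F} (hs : IsCompact s)
    (hf : ∀ x ∈ s, HasDerivAt f (f' x) x) (hf' : ∀ x ∈ s, f x = c → f' x ≠ 0) :
    {x ∈ s | f x = c}.Finite := by
  have hcont : ContinuousOn f s := fun x hx => (hf x hx).continuousAt.continuousWithinAt
  have hclosed : IsClosed {x ∈ s | f x = c} :=
    hcont.preimage_isClosed_of_isClosed hs.isClosed isClosed_singleton
  refine (hs.of_isClosed_subset hclosed fun x hx => hx.1).finite ?_
  refine isDiscrete_iff_nhdsNE.2 fun x hx => ?_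
  rw [Filter.inf_principal_eq_bot]
  filter_upwards [(hf x hx.1).eventually_ne (c := c) (hf' x hx.1 hx.2)] with y hy hys
  exact hy hys.2

section

open Matrix

theorem cross_eq_zero_of_dotProduct_eq_zero {R : Type*} [CommRing R] [LinearOrder R]
    [IsStrictOrderedRing R] {u n t : Fin 3 → R} (hn : n ≠ 0) (hnt : n ⬝ᵥ t = 0)
    (hnu : n ⬝ᵥ u = 0) (hu : n ⨯₃ t ⬝ᵥ u = 0) : u ⨯₃ t = 0 := by
  set w := u ⨯₃ t
  have hn_cross_w : n ⨯₃ w = 0 := by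
    rw [cross_cross_eq_smul_sub_smul', hnt, dotProduct_comm, hnu, zero_smul, zero_smul, sub_zero]
  have hn_dot_w : n ⬝ᵥ w = 0 := by
    rw [triple_product_permutation, ← cross_anticomm, dotProduct_neg, dotProduct_comm, hu,
      neg_zero]
  -- Lagrange's identity `|n × w|² = |n|² |w|² - (n ⬝ w)²`
  have hsq := cross_dot_cross n w n w
  rw [hn_cross_w, zero_dotProduct, dotProduct_comm w n, hn_dot_w, mul_zero, sub_zero] at hsq
  exact dotProduct_self_eq_zero.1 <|
    (mul_eq_zero.1 hsq.symm).resolve_left fun h => hn (dotProduct_self_eq_zero.1 h)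

theorem cross3_eq_zero_of_inner_eq_zero {u n t : EuclideanSpace ℝ (Fin 3)} (hn : n ≠ 0)
    (hnt : inner ℝ n t = 0) (hun : inner ℝ u n = 0) (hu : inner ℝ u (cross3 n t) = 0) :
    cross3 u t = 0 := by
  simp only [EuclideanSpace.inner_eq_star_dotProduct, star_trivial] at hnt hun hu
  have hcross : u.ofLp ⨯₃ t.ofLp = 0 :=
    cross_eq_zero_of_dotProduct_eq_zero (by simpa using hn) (by rwa [dotProduct_comm]) hun hu
  exact (EuclideanSpace.equiv (Fin 3) ℝ).symm.map_eq_zero_iff.2 hcross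

end

theorem stmt6_general
    (Γ n : ℝ → EuclideanSpace ℝ (Fin 3)) (τg : ℝ → ℝ)
    (hn : ContDiff ℝ 1 n)
    (hn1 : ∀ t, ‖n t‖ = 1)
    (hnT : ∀ t, (inner ℝ (n t) (deriv Γ t) : ℝ) = 0)
    (hτ : ∀ t, τg t ≠ 0)
    (hDarboux3 : ∀ t, deriv n t = -τg t • cross3 (n t) (deriv Γ t))
    (u : EuclideanSpace ℝ (Fin 3))
    (huT : ∀ t, cross3 u (deriv Γ t) ≠ 0) :
    ({t ∈ Set.Ico (0 : ℝ) (2 * π) | (inner ℝ u (n t) : ℝ) = 0}).Finite ∧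
    ∀ t₀ ∈ {t ∈ Set.Ico (0 : ℝ) (2 * π) | (inner ℝ u (n t) : ℝ) = 0},
      deriv (fun t => (inner ℝ u (n t) : ℝ)) t₀
        = -τg t₀ * (inner ℝ u (cross3 (n t₀) (deriv Γ t₀)) : ℝ) ∧
      deriv (fun t => (inner ℝ u (n t) : ℝ)) t₀ ≠ 0 := by
  have hderiv : ∀ t, HasDerivAt (fun t => (inner ℝ u (n t) : ℝ))
      (-τg t * (inner ℝ u (cross3 (n t) (deriv Γ t)) : ℝ)) t := by
    intro t
    have h := (hasDerivAt_const t u).inner ℝ ((hn.differentiable one_ne_zero) t).hasDerivAt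
    rwa [inner_zero_left, add_zero, hDarboux3, real_inner_smul_right] at h
  have hnondeg : ∀ t, (inner ℝ u (n t) : ℝ) = 0 →
      -τg t * (inner ℝ u (cross3 (n t) (deriv Γ t)) : ℝ) ≠ 0 := fun t hzero =>
    mul_ne_zero (neg_ne_zero.2 (hτ t)) fun hbin =>
      huT t (cross3_eq_zero_of_inner_eq_zero (ne_zero_of_norm_ne_zero (by simp [hn1])) (hnT t)
        hzero hbin)
  refine ⟨?_, fun t ht => ⟨(hderiv t).deriv, (hderiv t).deriv ▸ hnondeg t ht.2⟩⟩
  refine ((isCompact_Icc (a := 0) (b := 2 * π)).finite_setOf_eq_of_hasDerivAt_ne_zero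
    (fun t _ => hderiv t) fun t _ => hnondeg t).subset ?_
  exact fun t ht => ⟨Set.Ico_subset_Icc_self ht.1, ht.2⟩

/-- The zeros of `⟨u, n⟩` on `[0, 2π)` are finite and nondegenerate: at each zero the
derivative of `t ↦ ⟨u, n(t)⟩` equals `−τ_g·⟨u, n⊥⟩` and is nonzero. -/
theorem stmt6
    (Γ n : ℝ → EuclideanSpace ℝ (Fin 3)) (κg τg : ℝ → ℝ)
    (hΓ : ContDiff ℝ 2 Γ) (hΓper : Function.Periodic Γ (2 * π))
    (hT1 : ∀ t, ‖deriv Γ t‖ = 1)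
    (hn : ContDiff ℝ 1 n) (hnper : Function.Periodic n (2 * π))
    (hn1 : ∀ t, ‖n t‖ = 1)
    (hnT : ∀ t, (inner ℝ (n t) (deriv Γ t) : ℝ) = 0)
    (hκcont : Continuous κg) (hκper : Function.Periodic κg (2 * π))
    (hτcont : Continuous τg) (hτper : Function.Periodic τg (2 * π))
    (hτ : ∀ t, τg t ≠ 0)
    (hDarboux1 : ∀ t, deriv (deriv Γ) t = κg t • cross3 (n t) (deriv Γ t))
    (hDarboux2 : ∀ t, deriv (fun s => cross3 (n s) (deriv Γ s)) t
      = -κg t • deriv Γ t + τg t • n t)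
    (hDarboux3 : ∀ t, deriv n t = -τg t • cross3 (n t) (deriv Γ t))
    (u : EuclideanSpace ℝ (Fin 3)) (hu : ‖u‖ = 1)
    (huT : ∀ t, cross3 u (deriv Γ t) ≠ 0) :
    ({t ∈ Set.Ico (0 : ℝ) (2 * π) | (inner ℝ u (n t) : ℝ) = 0}).Finite ∧
    ∀ t₀ ∈ {t ∈ Set.Ico (0 : ℝ) (2 * π) | (inner ℝ u (n t) : ℝ) = 0},
      deriv (fun t => (inner ℝ u (n t) : ℝ)) t₀
        = -τg t₀ * (inner ℝ u (cross3 (n t₀) (deriv Γ t₀)) : ℝ) ∧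
      deriv (fun t => (inner ℝ u (n t) : ℝ)) t₀ ≠ 0 :=
  stmt6_general Γ n τg hn hn1 hnT hτ hDarboux3 u huT
end
end

section
/- Let (Γ, T, n⊥, n, κ_g, τ_g) be a closed asymptotic curve in ℝ³ and u a unit vector with u × T(t) ≠ 0 for all t; set u⊥(t) := (u × T(t))/|u × T(t)|. Let θ : ℝ → ℝ be a C¹ function with u⊥(t) = cos(θ(t))·n⊥(t) + sin(θ(t))·n(t) for all t. If ⟨u, n(t₀)⟩ = 0 at some t₀ (equivalently u⊥(t₀) = ± n(t₀)), then θ′(t₀) = −τ_g(t₀). In particular θ′(t₀) ≠ 0, so (0, ±1) are regular values of the map e^{iθ}. -/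
/-!
Put `ρ = |u × T|`. Pairing `u × T = ρ cos θ · n⊥ + ρ sin θ · n` with `n⊥` and `n` gives
`⟨u, n⟩ = ρ cos θ` and `⟨u, n⊥⟩ = -ρ sin θ`. At a zero `t₀` of `⟨u, n⟩` we have `cos θ = 0`, so
differentiating the first identity gives `⟨u, n′⟩ = -ρ sin θ · θ′`, while the Darboux equation
`n′ = -τ_g n⊥` gives `⟨u, n′⟩ = τ_g ρ sin θ`. As `ρ sin θ ≠ 0` there, `θ′(t₀) = -τ_g(t₀)`.
-/

open Real intervalIntegral

noncomputable section

local notation "E³" => EuclideanSpace ℝ (Fin 3)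

lemma inner_cross3_cross3 (a b c d : E³) :
    (inner ℝ (cross3 a b) (cross3 c d) : ℝ)
      = (inner ℝ a c : ℝ) * (inner ℝ b d : ℝ) - (inner ℝ a d : ℝ) * (inner ℝ b c : ℝ) := by
  simp [PiLp.inner_apply, Fin.sum_univ_three, cross3, crossProduct]; ring

lemma inner_self_cross3 (a b : E³) : (inner ℝ a (cross3 a b) : ℝ) = 0 := by
  simp [PiLp.inner_apply, Fin.sum_univ_three, cross3, crossProduct]; ring

lemma inner_cross3_left (a b c : E³) :
    (inner ℝ (cross3 a b) c : ℝ) = -(inner ℝ a (cross3 c b) : ℝ) := by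
  simp [PiLp.inner_apply, Fin.sum_univ_three, cross3, crossProduct]; ring

lemma differentiable_cross3_left (u : E³) : Differentiable ℝ (cross3 u) :=
  (EuclideanSpace.equiv (Fin 3) ℝ).symm.differentiable.comp <|
    (crossProduct ((EuclideanSpace.equiv (Fin 3) ℝ) u)).toContinuousLinearMap.differentiable.comp
      (EuclideanSpace.equiv (Fin 3) ℝ).differentiable

section Frame

variable {T n u : E³} {φ : ℝ}

lemma cross3_eq_of_angle (hu : cross3 u T ≠ 0)
    (hφ : ‖cross3 u T‖⁻¹ • cross3 u T = cos φ • cross3 n T + sin φ • n) :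
    cross3 u T = (‖cross3 u T‖ * cos φ) • cross3 n T + (‖cross3 u T‖ * sin φ) • n := by
  rw [mul_smul, mul_smul, ← smul_add, ← hφ, smul_inv_smul₀ (norm_ne_zero_iff.mpr hu)]

lemma inner_normal_eq_of_angle (hT : ‖T‖ = 1) (hn : ‖n‖ = 1) (hnT : (inner ℝ n T : ℝ) = 0)
    (hu : cross3 u T ≠ 0)
    (hφ : ‖cross3 u T‖⁻¹ • cross3 u T = cos φ • cross3 n T + sin φ • n) :
    (inner ℝ u n : ℝ) = ‖cross3 u T‖ * cos φ := by
  have h := congrArg (fun v => (inner ℝ v (cross3 n T) : ℝ)) (cross3_eq_of_angle hu hφ)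
  simp only [inner_add_left, real_inner_smul_left, inner_cross3_cross3, inner_self_cross3] at h
  simp only [real_inner_self_eq_norm_sq, hT, hn, real_inner_comm n T, hnT] at h
  simpa using h

lemma inner_conormal_eq_of_angle (hn : ‖n‖ = 1) (hu : cross3 u T ≠ 0)
    (hφ : ‖cross3 u T‖⁻¹ • cross3 u T = cos φ • cross3 n T + sin φ • n) :
    (inner ℝ u (cross3 n T) : ℝ) = -(‖cross3 u T‖ * sin φ) := by
  have h := congrArg (fun v => (inner ℝ v n : ℝ)) (cross3_eq_of_angle hu hφ)
  simp only [inner_add_left, real_inner_smul_left, inner_cross3_left, inner_self_cross3,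
    real_inner_self_eq_norm_sq, hn] at h
  linarith

end Frame

lemma hasDerivAt_mul_cos_of_cos_eq_zero {g θ : ℝ → ℝ} {t₀ θ' : ℝ}
    (hg : DifferentiableAt ℝ g t₀) (hθ : HasDerivAt θ θ' t₀) (hcos : cos (θ t₀) = 0) :
    HasDerivAt (fun t => g t * cos (θ t)) (-(g t₀ * sin (θ t₀)) * θ') t₀ :=
  (hg.hasDerivAt.mul hθ.cos).congr_deriv (by rw [hcos]; ring)

theorem stmt7_general
    (Γ n : ℝ → EuclideanSpace ℝ (Fin 3)) (τg : ℝ → ℝ)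
    (hΓ : ContDiff ℝ 2 Γ)
    (hT1 : ∀ t, ‖deriv Γ t‖ = 1)
    (hn : ContDiff ℝ 1 n)
    (hn1 : ∀ t, ‖n t‖ = 1)
    (hnT : ∀ t, (inner ℝ (n t) (deriv Γ t) : ℝ) = 0)
    (hτ : ∀ t, τg t ≠ 0)
    (hDarboux3 : ∀ t, deriv n t = -τg t • cross3 (n t) (deriv Γ t))
    (u : EuclideanSpace ℝ (Fin 3))
    (huT : ∀ t, cross3 u (deriv Γ t) ≠ 0)
    (θ : ℝ → ℝ) (hθ : ContDiff ℝ 1 θ)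
    (hθframe : ∀ t, ‖cross3 u (deriv Γ t)‖⁻¹ • cross3 u (deriv Γ t)
      = cos (θ t) • cross3 (n t) (deriv Γ t) + sin (θ t) • n t) :
    ∀ t₀ : ℝ, (inner ℝ u (n t₀) : ℝ) = 0 →
      deriv θ t₀ = -τg t₀ ∧ deriv θ t₀ ≠ 0 := by
  intro t₀ ht₀
  set ρ := fun t => ‖cross3 u (deriv Γ t)‖
  have hρ : ρ t₀ ≠ 0 := norm_ne_zero_iff.mpr (huT t₀)
  have hA : ∀ t, (inner ℝ u (n t) : ℝ) = ρ t * cos (θ t) := fun t =>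
    inner_normal_eq_of_angle (hT1 t) (hn1 t) (hnT t) (huT t) (hθframe t)
  have hcos : cos (θ t₀) = 0 := (mul_eq_zero.mp ((hA t₀).symm.trans ht₀)).resolve_left hρ
  have hsin : sin (θ t₀) ≠ 0 := by
    intro h; simpa [h, hcos] using sin_sq_add_cos_sq (θ t₀)
  have hρdiff : DifferentiableAt ℝ ρ t₀ :=
    ((differentiable_cross3_left u).comp hΓ.differentiable_deriv_two t₀).norm ℝ (huT t₀)
  have hDarboux :
      HasDerivAt (fun t => (inner ℝ u (n t) : ℝ)) (τg t₀ * (ρ t₀ * sin (θ t₀))) t₀ := by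
    have h := (hasDerivAt_const t₀ u).inner ℝ (hn.differentiable one_ne_zero t₀).hasDerivAt
    refine h.congr_deriv ?_
    rw [hDarboux3, real_inner_smul_right,
      inner_conormal_eq_of_angle (hn1 t₀) (huT t₀) (hθframe t₀)]
    simp only [inner_zero_left, add_zero, ρ]
    ring
  have hpolar :
      HasDerivAt (fun t => (inner ℝ u (n t) : ℝ)) (-(ρ t₀ * sin (θ t₀)) * deriv θ t₀) t₀ :=
    funext hA ▸ hasDerivAt_mul_cos_of_cos_eq_zero hρdiff
      (hθ.differentiable one_ne_zero t₀).hasDerivAt hcos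
  have hθ' : deriv θ t₀ = -τg t₀ := by
    have h := hDarboux.unique hpolar
    have hρsin : ρ t₀ * sin (θ t₀) ≠ 0 := mul_ne_zero hρ hsin
    apply mul_left_cancel₀ hρsin; linarith
  exact ⟨hθ', hθ' ▸ neg_ne_zero.mpr (hτ t₀)⟩

/-- At a zero of `⟨u, n⟩`, the angle `θ` of `u⊥ = (u × T)/|u × T|` measured in the frame
`(n⊥, n)` satisfies `θ′ = −τ_g ≠ 0`; so `(0, ±1)` are regular values of `e^{iθ}`. -/
theorem stmt7
    (Γ n : ℝ → EuclideanSpace ℝ (Fin 3)) (κg τg : ℝ → ℝ)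
    (hΓ : ContDiff ℝ 2 Γ) (hΓper : Function.Periodic Γ (2 * π))
    (hT1 : ∀ t, ‖deriv Γ t‖ = 1)
    (hn : ContDiff ℝ 1 n) (hnper : Function.Periodic n (2 * π))
    (hn1 : ∀ t, ‖n t‖ = 1)
    (hnT : ∀ t, (inner ℝ (n t) (deriv Γ t) : ℝ) = 0)
    (hκcont : Continuous κg) (hκper : Function.Periodic κg (2 * π))
    (hτcont : Continuous τg) (hτper : Function.Periodic τg (2 * π))
    (hτ : ∀ t, τg t ≠ 0)
    (hDarboux1 : ∀ t, deriv (deriv Γ) t = κg t • cross3 (n t) (deriv Γ t))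
    (hDarboux2 : ∀ t, deriv (fun s => cross3 (n s) (deriv Γ s)) t
      = -κg t • deriv Γ t + τg t • n t)
    (hDarboux3 : ∀ t, deriv n t = -τg t • cross3 (n t) (deriv Γ t))
    (u : EuclideanSpace ℝ (Fin 3)) (hu : ‖u‖ = 1)
    (huT : ∀ t, cross3 u (deriv Γ t) ≠ 0)
    (θ : ℝ → ℝ) (hθ : ContDiff ℝ 1 θ)
    (hθframe : ∀ t, ‖cross3 u (deriv Γ t)‖⁻¹ • cross3 u (deriv Γ t)
      = cos (θ t) • cross3 (n t) (deriv Γ t) + sin (θ t) • n t) :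
    ∀ t₀ : ℝ, (inner ℝ u (n t₀) : ℝ) = 0 →
      deriv θ t₀ = -τg t₀ ∧ deriv θ t₀ ≠ 0 :=
  stmt7_general Γ n τg hΓ hT1 hn hn1 hnT hτ hDarboux3 u huT θ hθ hθframe
end
end

section
/- Let T : ℝ → ℝ³ be a continuous 2π-periodic map whose values lie in the unit sphere, and suppose the origin lies in the interior of the convex hull of the range of T. Then there exists a C^∞, 2π-periodic function ρ : ℝ → ℝ with ρ(t) > 0 for all t such that ∫₀^{2π} ρ(t)·T(t) dt = 0. Consequently Γ(t) := ∫₀^t ρ(s)·T(s) ds defines a closed (2π-periodic up to the constant Γ(0)) curve with velocity ρ·T. (The convex-integration lemma used to construct Example 4.2.) -/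
open Real intervalIntegral

set_option maxHeartbeats 1000000

noncomputable section

/-- The set of integrals `∫₀^{2π} ρ·T` over admissible densities `ρ`. -/
def adm (T : ℝ → EuclideanSpace ℝ (Fin 3)) : Set (EuclideanSpace ℝ (Fin 3)) :=
  {v | ∃ ρ : ℝ → ℝ, ContDiff ℝ (⊤ : ℕ∞) ρ ∧ Function.Periodic ρ (2 * π) ∧ (∀ t, 0 < ρ t) ∧
    (∫ t in (0 : ℝ)..(2 * π), ρ t • T t) = v}

lemma adm_convex (T : ℝ → EuclideanSpace ℝ (Fin 3)) (hTcont : Continuous T) :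
    Convex ℝ (adm T) := by
  rintro v₁ ⟨ρ₁, hd₁, hp₁, hpos₁, hi₁⟩ v₂ ⟨ρ₂, hd₂, hp₂, hpos₂, hi₂⟩ a b ha hb hab
  refine ⟨fun t => a * ρ₁ t + b * ρ₂ t, (contDiff_const.mul hd₁).add (contDiff_const.mul hd₂),
    ?_, ?_, ?_⟩
  · intro t; simp only [hp₁ t, hp₂ t]
  · intro t
    rcases eq_or_lt_of_le ha with h | h
    · have hb1 : b = 1 := by linarith
      simp [← h, hb1, hpos₂ t]
    · exact add_pos_of_pos_of_nonneg (mul_pos h (hpos₁ t))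
        (mul_nonneg hb (hpos₂ t).le)
  · have h1 : IntervalIntegrable (fun t => ρ₁ t • T t) MeasureTheory.volume 0 (2 * π) :=
      ((hd₁.continuous).smul hTcont).intervalIntegrable _ _
    have h2 : IntervalIntegrable (fun t => ρ₂ t • T t) MeasureTheory.volume 0 (2 * π) :=
      ((hd₂.continuous).smul hTcont).intervalIntegrable _ _
    have : ∀ t, (a * ρ₁ t + b * ρ₂ t) • T t = a • (ρ₁ t • T t) + b • (ρ₂ t • T t) := by
      intro t; rw [add_smul, mul_smul, mul_smul]
    have h1' : IntervalIntegrable (fun t => a • (ρ₁ t • T t)) MeasureTheory.volume 0 (2 * π) :=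
      h1.smul a
    have h2' : IntervalIntegrable (fun t => b • (ρ₂ t • T t)) MeasureTheory.volume 0 (2 * π) :=
      h2.smul b
    rw [← hi₁, ← hi₂, ← intervalIntegral.integral_smul, ← intervalIntegral.integral_smul,
      ← intervalIntegral.integral_add h1' h2']
    apply intervalIntegral.integral_congr
    intro t _
    simp [add_smul, mul_smul]

/-- Approximate identity: every value of `T` is in the closure of `adm T`. -/
lemma adm_range_subset (T : ℝ → EuclideanSpace ℝ (Fin 3)) (hTcont : Continuous T)
    (hTper : Function.Periodic T (2 * π)) (hT1 : ∀ t, ‖T t‖ = 1) :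
    Set.range T ⊆ closure (adm T) := by
  rintro _ ⟨t₀, rfl⟩
  rw [Metric.mem_closure_iff]
  intro ε hε
  -- continuity of T at t₀
  obtain ⟨δ₀, hδ₀, hδ⟩ : ∃ δ₀ > 0, ∀ s : ℝ, dist s t₀ < δ₀ → dist (T s) (T t₀) < ε / 4 := by
    exact Metric.continuous_iff.mp hTcont t₀ (ε / 4) (by positivity)
  set δ : ℝ := min (δ₀ / 2) (π / 2) with hδdef
  have hπ : (0 : ℝ) < π := Real.pi_pos
  have hδpos : 0 < δ := lt_min (by linarith) (by linarith)
  have hδle : δ ≤ π / 2 := min_le_right _ _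
  have hδδ₀ : δ < δ₀ := lt_of_le_of_lt (min_le_left _ _) (by linarith)
  set r : ℝ := δ / 2 with hrdef
  have hrpos : 0 < r := by positivity
  set p : ℝ := (1 + Real.cos r) / 2 with hpdef
  set q : ℝ := (1 + Real.cos δ) / 2 with hqdef
  have hq0 : 0 ≤ q := by
    have := Real.neg_one_le_cos δ; simp only [hqdef]; linarith
  have hqp : q < p := by
    have : Real.cos δ < Real.cos r := by
      apply Real.cos_lt_cos_of_nonneg_of_le_pi hrpos.le (by linarith) (by linarith)
    simp only [hpdef, hqdef]; linarith
  have hp0 : 0 < p := lt_of_le_of_lt hq0 hqp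
  set C : ℝ := ‖∫ t in (0 : ℝ)..(2 * π), T t‖ with hCdef
  -- choose n
  obtain ⟨n, hn1, hn2, hn3⟩ : ∃ n : ℕ, 1 ≤ n ∧ (2 * π / r) * (q / p) ^ n < ε / 4 ∧
      C / n < ε / 4 := by
    have h1 : Filter.Tendsto (fun n : ℕ => (2 * π / r) * (q / p) ^ n) Filter.atTop (nhds 0) := by
      have := tendsto_pow_atTop_nhds_zero_of_lt_one (div_nonneg hq0 hp0.le)
        ((div_lt_one hp0).mpr hqp)
      simpa using this.const_mul (2 * π / r)
    have h2 : Filter.Tendsto (fun n : ℕ => C / n) Filter.atTop (nhds 0) :=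
      tendsto_const_div_atTop_nhds_zero_nat C
    have h1' := h1.eventually (eventually_lt_nhds (show (0:ℝ) < ε / 4 by positivity))
    have h2' := h2.eventually (eventually_lt_nhds (show (0:ℝ) < ε / 4 by positivity))
    obtain ⟨n, hn⟩ := ((h1'.and h2').and (Filter.eventually_ge_atTop 1)).exists
    exact ⟨n, hn.2, hn.1.1, hn.1.2⟩
  have hnpos : (0 : ℝ) < n := by exact_mod_cast hn1
  -- kernel
  set k : ℝ → ℝ := fun t => (1 + Real.cos (t - t₀)) / 2 with hkdef
  have hkcont : Continuous k := by
    apply Continuous.div_const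
    exact continuous_const.add (Real.continuous_cos.comp (continuous_id.sub continuous_const))
  have hk0 : ∀ t, 0 ≤ k t := by
    intro t; have := Real.neg_one_le_cos (t - t₀); simp only [hkdef]; linarith
  have hk1 : ∀ t, k t ≤ 1 := by
    intro t; have := Real.cos_le_one (t - t₀); simp only [hkdef]; linarith
  have hklow : ∀ t ∈ Set.Icc (t₀ - r) (t₀ + r), p ≤ k t := by
    intro t ht
    have habs : |t - t₀| ≤ r := by
      rw [abs_le]; constructor <;> [linarith [ht.1]; linarith [ht.2]]
    have : Real.cos r ≤ Real.cos (t - t₀) := by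
      rw [← Real.cos_abs (t - t₀)]
      apply Real.cos_le_cos_of_nonneg_of_le_pi (abs_nonneg _) (by linarith) habs
    simp only [hkdef, hpdef]; linarith
  have hkhigh : ∀ t, δ ≤ |t - t₀| → |t - t₀| ≤ π → k t ≤ q := by
    intro t h1 h2
    have : Real.cos (t - t₀) ≤ Real.cos δ := by
      rw [← Real.cos_abs (t - t₀)]
      apply Real.cos_le_cos_of_nonneg_of_le_pi hδpos.le h2 h1
    simp only [hkdef, hqdef]; linarith
  -- integrability helper
  have hint : ∀ (f : ℝ → ℝ), Continuous f → ∀ a b : ℝ,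
      IntervalIntegrable f MeasureTheory.volume a b :=
    fun f hf a b => hf.intervalIntegrable a b
  have hkn : Continuous fun t => (k t) ^ n := hkcont.pow n
  -- lower bound on total mass
  set A : ℝ := ∫ t in (t₀ - π)..(t₀ + π), (k t) ^ n with hAdef
  have hAsplit : A = (∫ t in (t₀ - π)..(t₀ - r), (k t) ^ n) +
      ((∫ t in (t₀ - r)..(t₀ + r), (k t) ^ n) + ∫ t in (t₀ + r)..(t₀ + π), (k t) ^ n) := by
    rw [intervalIntegral.integral_add_adjacent_intervals (hint _ hkn _ _) (hint _ hkn _ _),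
      intervalIntegral.integral_add_adjacent_intervals (hint _ hkn _ _) (hint _ hkn _ _)]
  have hmid : 2 * r * p ^ n ≤ ∫ t in (t₀ - r)..(t₀ + r), (k t) ^ n := by
    have h := intervalIntegral.integral_mono_on (by linarith : t₀ - r ≤ t₀ + r)
      (hint _ continuous_const _ _) (hint _ hkn _ _)
      (fun x hx => pow_le_pow_left₀ hp0.le (hklow x hx) n)
    rw [intervalIntegral.integral_const] at h
    calc 2 * r * p ^ n = (t₀ + r - (t₀ - r)) • p ^ n := by rw [smul_eq_mul]; ring
    _ ≤ _ := h
  have hside1 : 0 ≤ ∫ t in (t₀ - π)..(t₀ - r), (k t) ^ n :=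
    intervalIntegral.integral_nonneg (by linarith) (fun x _ => pow_nonneg (hk0 x) n)
  have hside2 : 0 ≤ ∫ t in (t₀ + r)..(t₀ + π), (k t) ^ n :=
    intervalIntegral.integral_nonneg (by linarith) (fun x _ => pow_nonneg (hk0 x) n)
  have hAlow : 2 * r * p ^ n ≤ A := by rw [hAsplit]; linarith
  have hApos : 0 < A := lt_of_lt_of_le (by positivity) hAlow
  -- the density
  set ρ : ℝ → ℝ := fun t => ((k t) ^ n + A / n) / A with hρdef
  have hρd : ContDiff ℝ (⊤ : ℕ∞) ρ := by
    apply ContDiff.div_const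
    exact ContDiff.add (ContDiff.pow (ContDiff.div_const (contDiff_const.add
      (Real.contDiff_cos.comp (contDiff_id.sub contDiff_const))) 2) n) contDiff_const
  have hρper : Function.Periodic ρ (2 * π) := by
    intro t
    have : Real.cos (t + 2 * π - t₀) = Real.cos (t - t₀) := by
      rw [show t + 2 * π - t₀ = (t - t₀) + 2 * π by ring, Real.cos_add_two_pi]
    simp only [hρdef, hkdef, this]
  have hρpos : ∀ t, 0 < ρ t := by
    intro t
    apply div_pos _ hApos
    exact add_pos_of_nonneg_of_pos (pow_nonneg (hk0 t) n) (div_pos hApos hnpos)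
  clear_value δ r p q C k A ρ
  set v : EuclideanSpace ℝ (Fin 3) := ∫ t in (0 : ℝ)..(2 * π), ρ t • T t with hvdef
  refine ⟨v, ⟨ρ, hρd, hρper, hρpos, rfl⟩, ?_⟩
  -- now the estimate
  have hρT : Continuous fun t => ρ t • T t := (hρd.continuous).smul hTcont
  have hρTper : Function.Periodic (fun t => ρ t • T t) (2 * π) := by
    intro t; simp only [hρper t, hTper t]
  have hshift : v = ∫ t in (t₀ - π)..(t₀ + π), ρ t • T t := by
    have h := hρTper.intervalIntegral_add_eq 0 (t₀ - π)
    rw [zero_add, show t₀ - π + 2 * π = t₀ + π by ring] at h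
    exact h
  have hTshift : (∫ t in (t₀ - π)..(t₀ + π), T t) = ∫ t in (0 : ℝ)..(2 * π), T t := by
    have h := hTper.intervalIntegral_add_eq (t₀ - π) 0
    rw [zero_add, show t₀ - π + 2 * π = t₀ + π by ring] at h
    exact h
  -- decompose v
  have hdecomp : v = A⁻¹ • (∫ t in (t₀ - π)..(t₀ + π), (k t) ^ n • T t)
      + (n : ℝ)⁻¹ • (∫ t in (0 : ℝ)..(2 * π), T t) := by
    rw [hshift, ← hTshift]
    have hco : ∀ t, ρ t • T t = A⁻¹ • ((k t) ^ n • T t) + (n : ℝ)⁻¹ • T t := by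
      intro t
      rw [smul_smul, ← add_smul]
      congr 1
      simp only [hρdef]
      field_simp
    have hi1 : IntervalIntegrable (fun t => A⁻¹ • ((k t) ^ n • T t)) MeasureTheory.volume
        (t₀ - π) (t₀ + π) := (by fun_prop :
          Continuous fun t => A⁻¹ • ((k t) ^ n • T t)).intervalIntegrable _ _
    have hi2 : IntervalIntegrable (fun t => (n : ℝ)⁻¹ • T t) MeasureTheory.volume
        (t₀ - π) (t₀ + π) := (by fun_prop :
          Continuous fun t => (n : ℝ)⁻¹ • T t).intervalIntegrable _ _
    simp_rw [hco]
    rw [intervalIntegral.integral_add hi1 hi2,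
      intervalIntegral.integral_smul, intervalIntegral.integral_smul]
  -- the key kernel estimate
  have hker : ‖A⁻¹ • (∫ t in (t₀ - π)..(t₀ + π), (k t) ^ n • T t) - T t₀‖
      ≤ ε / 4 + (2 * π / r) * (q / p) ^ n := by
    have hsub : A⁻¹ • (∫ t in (t₀ - π)..(t₀ + π), (k t) ^ n • T t) - T t₀
        = A⁻¹ • (∫ t in (t₀ - π)..(t₀ + π), (k t) ^ n • (T t - T t₀)) := by
      have : (∫ t in (t₀ - π)..(t₀ + π), (k t) ^ n • (T t - T t₀))
          = (∫ t in (t₀ - π)..(t₀ + π), (k t) ^ n • T t) - A • T t₀ := by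
        simp_rw [smul_sub]
        rw [intervalIntegral.integral_sub
          ((by fun_prop : Continuous fun t => (k t) ^ n • T t).intervalIntegrable _ _)
          ((by fun_prop : Continuous fun t => (k t) ^ n • T t₀).intervalIntegrable _ _),
          intervalIntegral.integral_smul_const, ← hAdef]
      rw [this, smul_sub, smul_smul, inv_mul_cancel₀ hApos.ne', one_smul]
    rw [hsub]
    rw [norm_smul, norm_inv, Real.norm_eq_abs, abs_of_pos hApos]
    -- bound the integral of norms
    have hnorm : ‖∫ t in (t₀ - π)..(t₀ + π), (k t) ^ n • (T t - T t₀)‖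
        ≤ ∫ t in (t₀ - π)..(t₀ + π), (k t) ^ n * ‖T t - T t₀‖ := by
      have h := intervalIntegral.norm_integral_le_integral_norm
        (f := fun t => (k t) ^ n • (T t - T t₀)) (μ := MeasureTheory.volume)
        (by linarith : t₀ - π ≤ t₀ + π)
      refine h.trans (le_of_eq ?_)
      apply intervalIntegral.integral_congr
      intro x _
      simp only [norm_smul, Real.norm_eq_abs, abs_of_nonneg (pow_nonneg (hk0 x) n)]
    set g : ℝ → ℝ := fun t => (k t) ^ n * ‖T t - T t₀‖ with hgdef
    have hgcont : Continuous g := hkn.mul ((hTcont.sub continuous_const).norm)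
    have hgnn : ∀ x, 0 ≤ g x := fun x => mul_nonneg (pow_nonneg (hk0 x) n) (norm_nonneg _)
    have hgsplit : (∫ t in (t₀ - π)..(t₀ + π), g t)
        = (∫ t in (t₀ - π)..(t₀ - δ), g t) + ((∫ t in (t₀ - δ)..(t₀ + δ), g t)
          + ∫ t in (t₀ + δ)..(t₀ + π), g t) := by
      rw [intervalIntegral.integral_add_adjacent_intervals (hint _ hgcont _ _)
          (hint _ hgcont _ _),
        intervalIntegral.integral_add_adjacent_intervals (hint _ hgcont _ _)
          (hint _ hgcont _ _)]
    -- far parts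
    have hfar1 : (∫ t in (t₀ - π)..(t₀ - δ), g t) ≤ 2 * π * q ^ n := by
      have hb : ∀ x ∈ Set.Icc (t₀ - π) (t₀ - δ), g x ≤ q ^ n * 2 := by
        intro x hx
        have habs1 : δ ≤ |x - t₀| := by
          rw [abs_sub_comm]; rw [le_abs]; left; linarith [hx.2]
        have habs2 : |x - t₀| ≤ π := by
          rw [abs_le]; constructor <;> [linarith [hx.1]; linarith [hx.2, hδpos]]
        have h1 : (k x) ^ n ≤ q ^ n := pow_le_pow_left₀ (hk0 x) (hkhigh x habs1 habs2) n
        have h2 : ‖T x - T t₀‖ ≤ 2 := by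
          calc ‖T x - T t₀‖ ≤ ‖T x‖ + ‖T t₀‖ := norm_sub_le _ _
          _ = 2 := by rw [hT1, hT1]; norm_num
        calc g x ≤ q ^ n * ‖T x - T t₀‖ :=
              mul_le_mul_of_nonneg_right h1 (norm_nonneg _)
        _ ≤ q ^ n * 2 := mul_le_mul_of_nonneg_left h2 (pow_nonneg hq0 n)
      have h := intervalIntegral.integral_mono_on (by linarith : t₀ - π ≤ t₀ - δ)
        (hint _ hgcont _ _) (hint _ continuous_const _ _) hb
      rw [intervalIntegral.integral_const, smul_eq_mul] at h
      calc (∫ t in (t₀ - π)..(t₀ - δ), g t) ≤ (t₀ - δ - (t₀ - π)) * (q ^ n * 2) := h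
      _ = (π - δ) * (q ^ n * 2) := by ring_nf
      _ ≤ π * (q ^ n * 2) := by
          apply mul_le_mul_of_nonneg_right (by linarith)
          positivity
      _ = 2 * π * q ^ n := by ring
    have hfar2 : (∫ t in (t₀ + δ)..(t₀ + π), g t) ≤ 2 * π * q ^ n := by
      have hb : ∀ x ∈ Set.Icc (t₀ + δ) (t₀ + π), g x ≤ q ^ n * 2 := by
        intro x hx
        have habs1 : δ ≤ |x - t₀| := by
          rw [le_abs]; left; linarith [hx.1]
        have habs2 : |x - t₀| ≤ π := by
          rw [abs_le]; constructor <;> [linarith [hx.1, hδpos]; linarith [hx.2]]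
        have h1 : (k x) ^ n ≤ q ^ n := pow_le_pow_left₀ (hk0 x) (hkhigh x habs1 habs2) n
        have h2 : ‖T x - T t₀‖ ≤ 2 := by
          calc ‖T x - T t₀‖ ≤ ‖T x‖ + ‖T t₀‖ := norm_sub_le _ _
          _ = 2 := by rw [hT1, hT1]; norm_num
        calc g x ≤ q ^ n * ‖T x - T t₀‖ :=
              mul_le_mul_of_nonneg_right h1 (norm_nonneg _)
        _ ≤ q ^ n * 2 := mul_le_mul_of_nonneg_left h2 (pow_nonneg hq0 n)
      have h := intervalIntegral.integral_mono_on (by linarith : t₀ + δ ≤ t₀ + π)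
        (hint _ hgcont _ _) (hint _ continuous_const _ _) hb
      rw [intervalIntegral.integral_const, smul_eq_mul] at h
      calc (∫ t in (t₀ + δ)..(t₀ + π), g t) ≤ (t₀ + π - (t₀ + δ)) * (q ^ n * 2) := h
      _ = (π - δ) * (q ^ n * 2) := by ring_nf
      _ ≤ π * (q ^ n * 2) := by
          apply mul_le_mul_of_nonneg_right (by linarith)
          positivity
      _ = 2 * π * q ^ n := by ring
    -- middle part
    have hmidg : (∫ t in (t₀ - δ)..(t₀ + δ), g t) ≤ ε / 4 * A := by
      have hb : ∀ x ∈ Set.Icc (t₀ - δ) (t₀ + δ), g x ≤ ε / 4 * (k x) ^ n := by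
        intro x hx
        have : dist x t₀ < δ₀ := by
          rw [Real.dist_eq, abs_sub_lt_iff]
          constructor <;> [linarith [hx.2, hδδ₀]; linarith [hx.1, hδδ₀]]
        have hTx : ‖T x - T t₀‖ ≤ ε / 4 := by
          have := hδ x this
          rw [dist_eq_norm] at this
          linarith
        calc g x ≤ (k x) ^ n * (ε / 4) :=
              mul_le_mul_of_nonneg_left hTx (pow_nonneg (hk0 x) n)
        _ = ε / 4 * (k x) ^ n := by ring
      have h := intervalIntegral.integral_mono_on (by linarith : t₀ - δ ≤ t₀ + δ)
        (hint _ hgcont _ _) (hint _ (continuous_const.mul hkn) _ _) hb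
      have h2 : (∫ t in (t₀ - δ)..(t₀ + δ), ε / 4 * (k t) ^ n)
          = ε / 4 * ∫ t in (t₀ - δ)..(t₀ + δ), (k t) ^ n := by
        rw [← intervalIntegral.integral_const_mul]
      have h3 : (∫ t in (t₀ - δ)..(t₀ + δ), (k t) ^ n) ≤ A := by
        have hA2 : A = (∫ t in (t₀ - π)..(t₀ - δ), (k t) ^ n) +
            ((∫ t in (t₀ - δ)..(t₀ + δ), (k t) ^ n) + ∫ t in (t₀ + δ)..(t₀ + π), (k t) ^ n) := by
          rw [intervalIntegral.integral_add_adjacent_intervals (hint _ hkn _ _) (hint _ hkn _ _),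
            intervalIntegral.integral_add_adjacent_intervals (hint _ hkn _ _) (hint _ hkn _ _)]
          exact hAdef
        have hs1 : 0 ≤ ∫ t in (t₀ - π)..(t₀ - δ), (k t) ^ n :=
          intervalIntegral.integral_nonneg (by linarith) (fun x _ => pow_nonneg (hk0 x) n)
        have hs2 : 0 ≤ ∫ t in (t₀ + δ)..(t₀ + π), (k t) ^ n :=
          intervalIntegral.integral_nonneg (by linarith) (fun x _ => pow_nonneg (hk0 x) n)
        rw [hA2]; linarith
      calc (∫ t in (t₀ - δ)..(t₀ + δ), g t) ≤ ε / 4 * ∫ t in (t₀ - δ)..(t₀ + δ), (k t) ^ n := by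
            rw [← h2]; exact h
      _ ≤ ε / 4 * A := mul_le_mul_of_nonneg_left h3 (by positivity)
    have htotal : (∫ t in (t₀ - π)..(t₀ + π), g t) ≤ ε / 4 * A + 4 * π * q ^ n := by
      rw [hgsplit]; linarith
    calc A⁻¹ * ‖∫ t in (t₀ - π)..(t₀ + π), (k t) ^ n • (T t - T t₀)‖
        ≤ A⁻¹ * (ε / 4 * A + 4 * π * q ^ n) := by
          apply mul_le_mul_of_nonneg_left (hnorm.trans htotal) (by positivity)
    _ = ε / 4 + (4 * π * q ^ n) / A := by
        field_simp
    _ ≤ ε / 4 + (4 * π * q ^ n) / (2 * r * p ^ n) := by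
        have h4 : (0:ℝ) ≤ 4 * π * q ^ n := by positivity
        have := div_le_div_of_nonneg_left h4 (by positivity : (0:ℝ) < 2 * r * p ^ n) hAlow
        linarith
    _ = ε / 4 + (2 * π / r) * (q / p) ^ n := by
        rw [div_pow]
        field_simp
        ring
  -- conclude
  rw [dist_eq_norm]
  have hCn : ‖(n : ℝ)⁻¹ • (∫ t in (0 : ℝ)..(2 * π), T t)‖ = C / n := by
    rw [norm_smul, norm_inv, Real.norm_natCast, ← hCdef, div_eq_inv_mul]
  calc ‖T t₀ - v‖
      = ‖(A⁻¹ • (∫ t in (t₀ - π)..(t₀ + π), (k t) ^ n • T t) - T t₀)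
        + (n : ℝ)⁻¹ • (∫ t in (0 : ℝ)..(2 * π), T t)‖ := by
        rw [hdecomp]; rw [← norm_neg]; congr 1; abel
  _ ≤ ‖A⁻¹ • (∫ t in (t₀ - π)..(t₀ + π), (k t) ^ n • T t) - T t₀‖
        + ‖(n : ℝ)⁻¹ • (∫ t in (0 : ℝ)..(2 * π), T t)‖ := norm_add_le _ _
  _ ≤ (ε / 4 + (2 * π / r) * (q / p) ^ n) + C / n := by rw [hCn]; exact add_le_add_left hker _
  _ < ε / 4 + ε / 4 + ε / 4 := by linarith
  _ < ε := by linarith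

/-- The convex-integration lemma of Example 4.2: if the origin lies in the interior of the
convex hull of a closed spherical curve `T`, there is a smooth positive `2π`-periodic
density `ρ` with `∫₀^{2π} ρ·T = 0`, so `Γ(t) = ∫₀^t ρ·T` is a closed curve with velocity
`ρ·T`. -/
theorem stmt16
    (T : ℝ → EuclideanSpace ℝ (Fin 3))
    (hTcont : Continuous T) (hTper : Function.Periodic T (2 * π))
    (hT1 : ∀ t, ‖T t‖ = 1)
    (h0 : (0 : EuclideanSpace ℝ (Fin 3)) ∈ interior (convexHull ℝ (Set.range T))) :
    ∃ ρ : ℝ → ℝ, ContDiff ℝ (⊤ : ℕ∞) ρ ∧ Function.Periodic ρ (2 * π) ∧ (∀ t, 0 < ρ t) ∧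
      (∫ t in (0 : ℝ)..(2 * π), ρ t • T t) = 0 ∧
      ∀ t, HasDerivAt (fun s => ∫ x in (0 : ℝ)..s, ρ x • T x) (ρ t • T t) t := by
  have hconv : Convex ℝ (adm T) := adm_convex T hTcont
  have hsub : convexHull ℝ (Set.range T) ⊆ closure (adm T) :=
    convexHull_min (adm_range_subset T hTcont hTper hT1) hconv.closure
  have h0c : (0 : EuclideanSpace ℝ (Fin 3)) ∈ interior (closure (adm T)) :=
    interior_mono hsub h0
  -- affine span is top, so interior of adm T is nonempty
  have hsubspan : closure (adm T) ⊆ (affineSpan ℝ (adm T) : Set (EuclideanSpace ℝ (Fin 3))) :=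
    closure_minimal (subset_affineSpan ℝ _) (affineSpan ℝ (adm T)).closed_of_finiteDimensional
  have hspan : affineSpan ℝ (adm T) = ⊤ := by
    have h1 : affineSpan ℝ ((affineSpan ℝ (adm T) : Set (EuclideanSpace ℝ (Fin 3)))) = ⊤ := by
      apply affineSpan_eq_top_of_nonempty_interior
      refine ⟨0, ?_⟩
      have h2 : (affineSpan ℝ (adm T) : Set (EuclideanSpace ℝ (Fin 3)))
          ⊆ convexHull ℝ (affineSpan ℝ (adm T) : Set (EuclideanSpace ℝ (Fin 3))) :=
        subset_convexHull ℝ _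
      exact interior_mono (hsub.trans (hsubspan.trans h2)) h0
    rwa [AffineSubspace.affineSpan_coe] at h1
  obtain ⟨x, hx⟩ := hconv.interior_nonempty_iff_affineSpan_eq_top.mpr hspan
  -- get a ball around 0 inside closure (adm T)
  obtain ⟨η, hη, hball⟩ := Metric.mem_nhds_iff.mp (mem_interior_iff_mem_nhds.mp h0c)
  -- combine interior point with closure point to get 0 in interior
  set r : ℝ := η / (2 * (‖x‖ + 1)) with hrdef
  have hrpos : 0 < r := by positivity
  set a : ℝ := r / (1 + r) with hadef
  have ha0 : 0 < a := by positivity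
  have ha1 : a < 1 := by
    rw [hadef, div_lt_one (by positivity)]; linarith
  have hy : -(r • x) ∈ Metric.ball (0 : EuclideanSpace ℝ (Fin 3)) η := by
    rw [Metric.mem_ball, dist_zero_right, norm_neg, norm_smul, Real.norm_eq_abs,
      abs_of_pos hrpos]
    calc r * ‖x‖ = η * ‖x‖ / (2 * (‖x‖ + 1)) := by rw [hrdef]; ring
    _ < η := by
        rw [div_lt_iff₀ (by positivity)]
        nlinarith [norm_nonneg x, hη]
  have hymem : -(r • x) ∈ closure (adm T) := hball hy
  have hcombo : a • x + (1 - a) • (-(r • x)) = 0 := by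
    rw [smul_neg, smul_smul, ← sub_eq_add_neg, ← sub_smul]
    have : a - (1 - a) * r = 0 := by
      rw [hadef]; field_simp; ring
    rw [this, zero_smul]
  have h0mem : (0 : EuclideanSpace ℝ (Fin 3)) ∈ interior (adm T) := by
    rw [← hcombo]
    exact hconv.combo_interior_closure_mem_interior hx hymem ha0 (by linarith) (by ring)
  obtain ⟨ρ, hd, hper, hpos, hint⟩ := interior_subset h0mem
  exact ⟨ρ, hd, hper, hpos, hint,
    fun t => (((hd.continuous).smul hTcont).integral_hasStrictDerivAt 0 t).hasDerivAt⟩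
end
end
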